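/- arXiv:1409.6977 — 3 statements merged into one kernel-verified Lean document; each statement's English description precedes it below -/
import Mathlib

section
/- On N̄ = ℕ ∪ {∞}, the Ershov topology (the topology generated by all Markov-semidecidable sets) is generated by the singletons {n} for n ∈ ℕ together with the Friedberg sets {x ∈ N̄ : K(x) < h(x)} for computable orders h (extending h to ∞ by h(∞) = ∞ and interpreting K(∞) via Kolmogorov complexity of the point ∞). -/
/-!
Singletons `{n}` are semidecidable from a name by waiting for the code of `{n}`. A Friedberg set
is semidecidable by waiting either for a code of `[m, ∞]` with `h m` larger than the length of a
program that decodes the name (this covers `∞`, and for a name of `n` gives `K(n) < h(n)` since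
`h` is monotone), or for the code of `{n}` together with a program of length `< h n` printing `n`.

Conversely, let `A` be Markov-semidecidable with `∞ ∈ A`. For each program `p`, the recursion
theorem gives a name that describes `∞` until the semidecision procedure accepts it, and then
commits to the output `n` of `p`. If it were never accepted it would be a name of `∞ ∈ A`, so it
is accepted at some stage, and `n ∈ A` whenever that stage is at most `n`. Letting `h n` be the
least length of a program not yet accepted at stage `n` gives a computable order with
`FriedSet h ⊆ A`. Hence every Markov-semidecidable set is a union of singletons and at most one
Friedberg set.
-/

/-- The standard enumeration of partial computable functions. -/
noncomputable def phi (e : ℕ) : ℕ →. ℕ := (Denumerable.ofNat Nat.Partrec.Code e).eval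

/-- The e-th computably enumerable set. -/
def W (e : ℕ) : Set ℕ := (phi e).Dom

/-- Codes of the basic neighborhoods of a point of `N̄ = ℕ ∪ {∞}`: `2n` codes the singleton
`{n}` and `2m+1` codes the semi-line `[m,∞]`. -/
def nbhdCodes (x : ℕ∞) : Set ℕ :=
  {i | (∃ n : ℕ, i = 2 * n ∧ x = (n : ℕ∞)) ∨ (∃ m : ℕ, i = 2 * m + 1 ∧ (m : ℕ∞) ≤ x)}

/-- `e` is a Markov-name of `x ∈ N̄`: `W_e` is the set of codes of basic neighborhoods of `x`. -/
def isName (e : ℕ) (x : ℕ∞) : Prop := W e = nbhdCodes x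

/-- `A ⊆ N̄` is Markov-semidecidable: membership is semidecidable from any Markov-name. -/
def MarkovSemidecN (A : Set ℕ∞) : Prop :=
  ∃ I : Set ℕ, REPred (· ∈ I) ∧ ∀ e x, isName e x → (x ∈ A ↔ e ∈ I)

/-- Plain Kolmogorov complexity of a natural number. -/
noncomputable def Knat (n : ℕ) : ℕ := sInf (Nat.size '' {e | phi e 0 = Part.some n})

/-- A computable order: a nondecreasing unbounded computable function. -/
def ComputableOrder (h : ℕ → ℕ) : Prop :=
  Computable h ∧ Monotone h ∧ ∀ m, ∃ n, m ≤ h n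

/-- The Friedberg set of a computable order `h` (with `h(∞) = ∞`, so that `∞` always
belongs, since `K(∞)` is finite). -/
def FriedSet (h : ℕ → ℕ) : Set ℕ∞ :=
  {x | x = ⊤ ∨ ∃ n : ℕ, x = (n : ℕ∞) ∧ Knat n < h n}

open Nat.Partrec (Code)
open Nat.Partrec.Code

section REPred

variable {α β : Type*} [Primcodable α] [Primcodable β]

theorem rfind_some_dom_iff {f : ℕ → Bool} :
    (Nat.rfind fun n => Part.some (f n)).Dom ↔ ∃ n, f n = true :=
  Nat.rfind_dom.trans <| by simp

theorem eval_dom_iff_exists_evaln {c : Code} {n : ℕ} :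
    (eval c n).Dom ↔ ∃ s, (evaln s c n).isSome = true := by
  simp only [Part.dom_iff_mem, evaln_complete, Option.isSome_iff_exists, Option.mem_def]
  exact exists_comm

theorem monotone_evaln_isSome (c : Code) (n : ℕ) : Monotone fun s => (evaln s c n).isSome :=
  fun _ _ hs => Bool.le_iff_imp.2 fun h => by
    obtain ⟨x, hx⟩ := Option.isSome_iff_exists.1 h
    exact Option.isSome_iff_exists.2 ⟨x, evaln_mono hs hx⟩

theorem REPred.exists_stage {p : α → Prop} (hp : REPred p) :
    ∃ D : α → ℕ → Bool, Primrec₂ D ∧ (∀ a, Monotone (D a)) ∧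
      ∀ a, p a ↔ ∃ s, D a s = true := by
  obtain ⟨c, hc⟩ := exists_code.1 hp
  refine ⟨fun a s => (evaln s c (Encodable.encode a)).isSome, ?_,
    fun a => monotone_evaln_isSome c _, fun a => ?_⟩
  · exact Primrec.option_isSome.comp
      (primrec_evaln.comp ((Primrec.snd.pair (Primrec.const c)).pair
        (Primrec.encode.comp Primrec.fst)))
  · rw [← eval_dom_iff_exists_evaln, hc]
    simpa using ⟨fun h => ⟨h, trivial⟩, fun ⟨h, _⟩ => h⟩

theorem rePred_exists_of_computable₂ {D : α → ℕ → Bool} (hD : Computable₂ D) :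
    REPred fun a => ∃ s, D a s = true :=
  (Partrec.rfind hD.partrec₂).dom_re.of_eq fun _ => rfind_some_dom_iff

theorem REPred.comp {p : β → Prop} (hp : REPred p) {f : α → β} (hf : Computable f) :
    REPred fun a => p (f a) :=
  Partrec.comp hp hf

theorem REPred.or {p q : α → Prop} (hp : REPred p) (hq : REPred q) :
    REPred fun a => p a ∨ q a := by
  obtain ⟨D, hD, -, hpD⟩ := hp.exists_stage
  obtain ⟨E, hE, -, hqE⟩ := hq.exists_stage
  refine (rePred_exists_of_computable₂ (Primrec.or.comp₂ hD hE).to_comp).of_eq fun a => ?_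
  simp only [hpD, hqE, Bool.or_eq_true, exists_or]

theorem REPred.and {p q : α → Prop} (hp : REPred p) (hq : REPred q) :
    REPred fun a => p a ∧ q a := by
  obtain ⟨D, hD, hDm, hpD⟩ := hp.exists_stage
  obtain ⟨E, hE, hEm, hqE⟩ := hq.exists_stage
  refine (rePred_exists_of_computable₂ (Primrec.and.comp₂ hD hE).to_comp).of_eq fun a => ?_
  simp only [hpD, hqE, Bool.and_eq_true]
  constructor
  · rintro ⟨s, hs, ht⟩
    exact ⟨⟨s, hs⟩, s, ht⟩
  · rintro ⟨⟨s, hs⟩, t, ht⟩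
    exact ⟨max s t, Bool.le_iff_imp.1 (hDm a (le_max_left s t)) hs,
      Bool.le_iff_imp.1 (hEm a (le_max_right s t)) ht⟩

theorem REPred.exists_partrec_selector {R : α → ℕ → Prop}
    (hR : REPred fun q : α × ℕ => R q.1 q.2) :
    ∃ f : α →. ℕ, Partrec f ∧ (∀ a b, b ∈ f a → R a b) ∧ ∀ a, (∃ b, R a b) → (f a).Dom := by
  obtain ⟨D, hD, -, hRD⟩ := hR.exists_stage
  have hD' : Primrec₂ fun a (w : ℕ) => D (a, w.unpair.1) w.unpair.2 :=
    hD.comp₂ (Primrec₂.pair.comp₂ Primrec₂.left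
      (Primrec.fst.comp₂ (Primrec.unpair.comp₂ Primrec₂.right)))
      (Primrec.snd.comp₂ (Primrec.unpair.comp₂ Primrec₂.right))
  refine ⟨fun a => (Nat.rfind fun w => Part.some (D (a, w.unpair.1) w.unpair.2)).map
    fun w => w.unpair.1, ?_, fun a b hb => ?_, fun a ⟨b, hb⟩ => ?_⟩
  · exact (Partrec.rfind hD'.to_comp.partrec₂).map
      (Primrec.fst.comp (Primrec.unpair.comp Primrec.snd)).to_comp.to₂
  · obtain ⟨w, hw, rfl⟩ := Part.mem_map_iff _ |>.1 hb
    exact (hRD (a, _)).2 ⟨_, by simpa using Nat.rfind_spec hw⟩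
  · obtain ⟨s, hs⟩ := (hRD (a, b)).1 hb
    exact rfind_some_dom_iff.2 ⟨Nat.pair b s, by simpa using hs⟩

theorem REPred.exists {p : α → ℕ → Prop} (hp : REPred fun q : α × ℕ => p q.1 q.2) :
    REPred fun a => ∃ n, p a n := by
  obtain ⟨f, hf, hfp, hdom⟩ := hp.exists_partrec_selector
  refine hf.dom_re.of_eq fun a => ⟨fun h => ?_, hdom a⟩
  obtain ⟨b, hb⟩ := Part.dom_iff_mem.1 h
  exact ⟨b, hfp a b hb⟩

end REPred

theorem rePred_mem_W : REPred fun q : ℕ × ℕ => q.2 ∈ W q.1 :=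
  (eval_part.comp ((Computable.ofNat Code).comp Computable.fst) Computable.snd).dom_re

theorem rePred_two_mul_mem_W : REPred fun q : ℕ × ℕ => 2 * q.2 ∈ W q.1 :=
  rePred_mem_W.comp (f := fun q : ℕ × ℕ => (q.1, 2 * q.2))
    (Computable.fst.pair (Primrec.nat_mul.comp (Primrec.const 2) Primrec.snd).to_comp)

theorem rePred_two_mul_add_one_mem_W : REPred fun q : ℕ × ℕ => 2 * q.2 + 1 ∈ W q.1 :=
  rePred_mem_W.comp (f := fun q : ℕ × ℕ => (q.1, 2 * q.2 + 1))
    (Computable.fst.pair (Primrec.nat_add.comp (Primrec.nat_mul.comp (Primrec.const 2)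
      Primrec.snd) (Primrec.const 1)).to_comp)

theorem rePred_mem_phi : REPred fun q : ℕ × ℕ => q.2 ∈ phi q.1 0 := by
  have hD : Primrec₂ fun (q : ℕ × ℕ) (s : ℕ) =>
      decide (evaln s (Denumerable.ofNat Code q.1) 0 = some q.2) :=
    Primrec.eq.decide.comp₂
      (primrec_evaln.comp₂ (Primrec₂.pair.comp₂ (Primrec₂.pair.comp₂ Primrec₂.right
        ((Primrec.ofNat Code).comp₂ (Primrec.fst.comp₂ Primrec₂.left)))
        (Primrec₂.const 0)))
      (Primrec.option_some.comp₂ (Primrec.snd.comp₂ Primrec₂.left))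
  refine (rePred_exists_of_computable₂ hD.to_comp).of_eq fun q => ?_
  simp [phi, evaln_complete, Option.mem_def]

theorem exists_primrec_phi_eq {g : ℕ → ℕ →. ℕ} (hg : Partrec₂ g) :
    ∃ B : ℕ → ℕ, Primrec B ∧ ∀ e, phi (B e) = g e := by
  obtain ⟨c, hc⟩ := exists_code.1 <| Partrec.nat_iff.1 <|
    hg.comp (Computable.fst.comp Computable.unpair) (Computable.snd.comp Computable.unpair)
  refine ⟨fun e => Encodable.encode (curry c e),
    Primrec.encode.comp (primrec₂_curry.comp (Primrec.const c) Primrec.id), fun e => ?_⟩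
  funext i
  simp [phi, eval_curry, hc]

theorem exists_primrec_W_fixedPoint {Q : ℕ → ℕ → ℕ → Prop}
    (hQ : REPred fun q : (ℕ × ℕ) × ℕ => Q q.1.1 q.1.2 q.2) :
    ∃ ep : ℕ → ℕ, Primrec ep ∧ ∀ p i, i ∈ W (ep p) ↔ Q (ep p) p i := by
  have hcurry : Primrec₂ fun (c : Code) (p : ℕ) => Encodable.encode (curry c p) :=
    Primrec.encode.comp₂ primrec₂_curry
  have hF : Partrec₂ fun (c : Code) (x : ℕ) =>
      (Part.assert (Q (Encodable.encode (curry c x.unpair.1)) x.unpair.1 x.unpair.2)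
        fun _ => Part.some ()).map fun _ => (0 : ℕ) := by
    have hx : Primrec fun q : Code × ℕ => q.2.unpair :=
      Primrec.unpair.comp Primrec.snd
    have hargs : Computable fun q : Code × ℕ =>
        ((Encodable.encode (curry q.1 q.2.unpair.1), q.2.unpair.1), q.2.unpair.2) :=
      (((hcurry.comp Primrec.fst (Primrec.fst.comp hx)).pair
        (Primrec.fst.comp hx)).pair (Primrec.snd.comp hx)).to_comp
    exact Partrec.map (hQ.comp hargs) (Computable.const 0).to₂
  obtain ⟨c, hc⟩ := fixed_point₂ hF
  refine ⟨fun p => Encodable.encode (curry c p), hcurry.comp (Primrec.const c) Primrec.id,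
    fun p i => ?_⟩
  change (eval _ i).Dom ↔ _
  rw [Denumerable.ofNat_encode, eval_curry, hc]
  simp only [Part.map_Dom, Part.assert, Nat.unpair_pair]
  exact ⟨fun ⟨h, _⟩ => h, fun h => ⟨h, trivial⟩⟩

theorem primrec_two_pow : Primrec fun k : ℕ => 2 ^ k :=
  (Primrec₂.unpaired'.1 Nat.Primrec.pow).comp (Primrec.const 2) Primrec.id

theorem computable_size : Computable Nat.size := by
  have hP : ComputablePred fun q : ℕ × ℕ => q.1 < 2 ^ q.2 :=
    (Primrec.nat_lt.comp Primrec.fst (primrec_two_pow.comp Primrec.snd)).computablePred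
  have hex (n : ℕ) : ∃ k, n < 2 ^ k := ⟨_, Nat.lt_size_self n⟩
  refine (Computable.find (P := fun n k => n < 2 ^ k) hP hex).of_eq fun n => ?_
  exact le_antisymm (Nat.find_le (Nat.lt_size_self n)) (Nat.size_le.2 (Nat.find_spec (hex n)))

theorem knat_lt_iff {n c : ℕ} : Knat n < c ↔ ∃ p, Nat.size p < c ∧ n ∈ phi p 0 := by
  have hne : (Nat.size '' {e | phi e 0 = Part.some n}).Nonempty :=
    ⟨_, Set.mem_image_of_mem _
      (show Encodable.encode (Code.const n) ∈ _ by simp [phi, eval_const])⟩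
  simp_rw [← Part.eq_some_iff]
  constructor
  · intro h
    obtain ⟨p, hp, hsize⟩ := Nat.sInf_mem hne
    exact ⟨p, hsize ▸ h, hp⟩
  · rintro ⟨p, hsize, hp⟩
    exact (Nat.sInf_le (Set.mem_image_of_mem Nat.size hp)).trans_lt hsize

theorem rePred_knat_lt {h : ℕ → ℕ} (hh : Computable h) : REPred fun n => Knat n < h n := by
  have hsize : ComputablePred fun q : ℕ × ℕ => Nat.size q.2 < h q.1 :=
    (Primrec.nat_lt.decide.to_comp.comp (computable_size.comp Computable.snd)
      (hh.comp Computable.fst)).computablePred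
  exact (hsize.to_re.and (rePred_mem_phi.comp (Computable.snd.pair Computable.fst))).exists.of_eq
    fun n => knat_lt_iff.symm

theorem two_mul_mem_nbhdCodes {n : ℕ} {x : ℕ∞} : 2 * n ∈ nbhdCodes x ↔ x = n := by
  simp only [nbhdCodes, Set.mem_ofPred_eq]
  constructor
  · rintro (⟨k, hk, rfl⟩ | ⟨m, hm, _⟩)
    · rw [show k = n by omega]
    · omega
  · rintro rfl
    exact Or.inl ⟨n, rfl, rfl⟩

theorem two_mul_add_one_mem_nbhdCodes {m : ℕ} {x : ℕ∞} :
    2 * m + 1 ∈ nbhdCodes x ↔ (m : ℕ∞) ≤ x := by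
  simp only [nbhdCodes, Set.mem_ofPred_eq]
  constructor
  · rintro (⟨k, hk, _⟩ | ⟨k, hk, hle⟩)
    · omega
    · rwa [show m = k by omega]
  · exact fun hle => Or.inr ⟨m, rfl, hle⟩

theorem set_ext_parity {S T : Set ℕ} (heven : ∀ n, 2 * n ∈ S ↔ 2 * n ∈ T)
    (hodd : ∀ m, 2 * m + 1 ∈ S ↔ 2 * m + 1 ∈ T) : S = T := by
  ext i
  obtain ⟨k, rfl | rfl⟩ := Nat.even_or_odd' i
  exacts [heven k, hodd k]

theorem mem_nbhdCodes_coe {i n : ℕ} :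
    i ∈ nbhdCodes (n : ℕ∞) ↔ i = 2 * n ∨ i % 2 = 1 ∧ i ≤ 2 * n + 1 := by
  obtain ⟨k, rfl | rfl⟩ := Nat.even_or_odd' i
  · rw [two_mul_mem_nbhdCodes, Nat.cast_inj]
    omega
  · rw [two_mul_add_one_mem_nbhdCodes, Nat.cast_le]
    omega

theorem top_mem_friedSet (h : ℕ → ℕ) : ⊤ ∈ FriedSet h := Or.inl rfl

theorem coe_mem_friedSet {h : ℕ → ℕ} {n : ℕ} : (n : ℕ∞) ∈ FriedSet h ↔ Knat n < h n := by
  simp [FriedSet]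

theorem isName.mem_W_iff {e i : ℕ} {x : ℕ∞} (hx : isName e x) : i ∈ W e ↔ i ∈ nbhdCodes x :=
  Set.ext_iff.1 hx i

theorem markovSemidecN_singleton (n : ℕ) : MarkovSemidecN {(n : ℕ∞)} := by
  refine ⟨{e | 2 * n ∈ W e}, rePred_mem_W.comp (Computable.id.pair (Computable.const _)),
    fun e x hx => ?_⟩
  rw [Set.mem_ofPred_eq, hx.mem_W_iff, two_mul_mem_nbhdCodes, Set.mem_singleton_iff]

theorem exists_computable_program_of_isName :
    ∃ B : ℕ → ℕ, Computable B ∧ ∀ e (n : ℕ), isName e n → phi (B e) 0 = Part.some n := by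
  obtain ⟨f, hf, hfR, hdom⟩ :=
    rePred_two_mul_mem_W.exists_partrec_selector (R := fun e n => 2 * n ∈ W e)
  obtain ⟨B, hB, hBf⟩ := exists_primrec_phi_eq (g := fun e _ => f e) (hf.comp Computable.fst)
  refine ⟨B, hB.to_comp, fun e n hn => ?_⟩
  have hW : ∀ b, 2 * b ∈ W e ↔ b = n := fun b => by
    rw [hn.mem_W_iff, two_mul_mem_nbhdCodes, eq_comm, Nat.cast_inj]
  obtain ⟨b, hb⟩ := Part.dom_iff_mem.1 (hdom e ⟨n, (hW n).2 rfl⟩)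
  rw [hBf, Part.eq_some_iff, ← (hW b).1 (hfR e b hb)]
  exact hb

theorem markovSemidecN_friedSet {h : ℕ → ℕ} (hh : ComputableOrder h) :
    MarkovSemidecN (FriedSet h) := by
  obtain ⟨hcomp, hmono, hunb⟩ := hh
  obtain ⟨B, hB, hBn⟩ := exists_computable_program_of_isName
  refine ⟨{e | (∃ m, 2 * m + 1 ∈ W e ∧ Nat.size (B e) < h m) ∨
    ∃ n, 2 * n ∈ W e ∧ Knat n < h n}, ?_, fun e x hx => ?_⟩
  · have hodd : REPred fun q : ℕ × ℕ => 2 * q.2 + 1 ∈ W q.1 ∧ Nat.size (B q.1) < h q.2 :=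
      rePred_two_mul_add_one_mem_W.and (Primrec.nat_lt.decide.to_comp.comp
        (computable_size.comp (hB.comp Computable.fst))
        (hcomp.comp Computable.snd)).computablePred.to_re
    have heven : REPred fun q : ℕ × ℕ => 2 * q.2 ∈ W q.1 ∧ Knat q.2 < h q.2 :=
      rePred_two_mul_mem_W.and ((rePred_knat_lt hcomp).comp Computable.snd)
    exact hodd.exists.or heven.exists
  simp only [Set.mem_ofPred_eq, hx.mem_W_iff, two_mul_mem_nbhdCodes,
    two_mul_add_one_mem_nbhdCodes]
  induction x using ENat.recTopCoe with
  | top =>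
    obtain ⟨m, hm⟩ := hunb (Nat.size (B e) + 1)
    exact iff_of_true (top_mem_friedSet h) (Or.inl ⟨m, le_top, hm⟩)
  | coe n =>
    simp only [coe_mem_friedSet, Nat.cast_le, Nat.cast_inj]
    constructor
    · exact fun hn => Or.inr ⟨n, rfl, hn⟩
    · rintro (⟨m, hmn, hm⟩ | ⟨_, rfl, hn⟩)
      · exact knat_lt_iff.2 ⟨B e, hm.trans_le (hmono hmn), Part.eq_some_iff.1 (hBn e n hx)⟩
      · exact hn

theorem exists_stage_forall_lt {acc : ℕ → ℕ → Bool} (hmono : ∀ p, Monotone (acc p))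
    (hex : ∀ p, ∃ s, acc p s = true) (N : ℕ) : ∃ s, ∀ p < N, acc p s = true := by
  choose t ht using hex
  exact ⟨(Finset.range N).sup t, fun p hp => Bool.le_iff_imp.1
    (hmono p (Finset.le_sup (Finset.mem_range.2 hp))) (ht p)⟩

/-- The least length `k` of a program not yet accepted at stage `n` (as `p < 2 ^ k` iff
`Nat.size p ≤ k`), capped at `n`. -/
def stageOrder (acc : ℕ → ℕ → Bool) (n : ℕ) : ℕ :=
  Nat.find (⟨n, Or.inl rfl⟩ : ∃ k, k = n ∨ ∃ p < 2 ^ k, acc p n = false)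

section stageOrder

variable {acc : ℕ → ℕ → Bool}

theorem stageOrder_le (n : ℕ) : stageOrder acc n ≤ n :=
  Nat.find_min' _ (Or.inl rfl)

theorem eq_true_of_size_lt_stageOrder {p n : ℕ} (h : Nat.size p < stageOrder acc n) :
    acc p n = true := by
  have hmin := Nat.find_min _ h
  push Not at hmin
  simpa using hmin.2 p (Nat.lt_size_self p)

theorem monotone_stageOrder (hmono : ∀ p, Monotone (acc p)) : Monotone (stageOrder acc) := by
  intro n n' hn
  rcases Nat.find_spec (⟨n', Or.inl rfl⟩ : ∃ k, k = n' ∨ ∃ p < 2 ^ k, acc p n' = false) with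
    h | ⟨p, hp, hpn'⟩
  · exact (stageOrder_le n).trans (hn.trans_eq h.symm)
  · exact Nat.find_min' _ (Or.inr ⟨p, hp, Bool.eq_false_of_le_false (hpn' ▸ hmono p hn)⟩)

theorem exists_le_stageOrder (hmono : ∀ p, Monotone (acc p)) (hex : ∀ p, ∃ s, acc p s = true)
    (m : ℕ) : ∃ n, m ≤ stageOrder acc n := by
  obtain ⟨s, hs⟩ := exists_stage_forall_lt hmono hex (2 ^ m)
  refine ⟨max m s, Nat.le_find_iff _ _ |>.2 fun k hk => ?_⟩
  push Not
  refine ⟨by omega, fun p hp => ?_⟩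
  have hpm : p < 2 ^ m := hp.trans_le (Nat.pow_le_pow_right two_pos hk.le)
  simpa using Bool.le_iff_imp.1 (hmono p (le_max_right m s)) (hs p hpm)

theorem computable_stageOrder (hacc : Primrec₂ acc) : Computable (stageOrder acc) := by
  have hpending : PrimrecRel fun (k n : ℕ) => ∃ p < k, acc p n = false :=
    PrimrecRel.exists_lt (Primrec.eq.comp hacc (Primrec.const false))
  have hP : ComputablePred fun q : ℕ × ℕ => q.2 = q.1 ∨ ∃ p < 2 ^ q.2, acc p q.1 = false :=
    ((Primrec.eq.comp Primrec.snd Primrec.fst).or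
      (hpending.comp (primrec_two_pow.comp Primrec.snd) Primrec.fst)).computablePred
  exact Computable.find (P := fun n k => k = n ∨ ∃ p < 2 ^ k, acc p n = false) hP _

theorem computableOrder_stageOrder (hacc : Primrec₂ acc) (hmono : ∀ p, Monotone (acc p))
    (hex : ∀ p, ∃ s, acc p s = true) : ComputableOrder (stageOrder acc) :=
  ⟨computable_stageOrder hacc, monotone_stageOrder hmono, exists_le_stageOrder hmono hex⟩

end stageOrder

/-- The codes enumerated by a name that describes `⊤` until the stage test `acc` succeeds at a
stage `n` with `out n`, and from then on describes `n`. -/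
def guessCodes (acc : ℕ → Bool) (out : ℕ → Prop) : Set ℕ :=
  {i | (∃ m, i = 2 * m + 1 ∧ acc m = false) ∨ ∃ n, out n ∧ acc n = true ∧ i ∈ nbhdCodes n}

theorem guessCodes_eq_top {acc : ℕ → Bool} {out : ℕ → Prop} (h : ∀ s, acc s = false) :
    guessCodes acc out = nbhdCodes ⊤ := by
  refine set_ext_parity (fun n => ?_) (fun m => ?_) <;>
    simp [guessCodes, h, two_mul_mem_nbhdCodes, two_mul_add_one_mem_nbhdCodes]
  omega

theorem guessCodes_eq_coe {acc : ℕ → Bool} {out : ℕ → Prop} {n : ℕ} (hmono : Monotone acc)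
    (hout : ∀ k, out k → k = n) (hn : out n) (hacc : acc n = true) :
    guessCodes acc out = nbhdCodes n := by
  ext i
  refine ⟨?_, fun hi => Or.inr ⟨n, hn, hacc, hi⟩⟩
  rintro (⟨m, rfl, hm⟩ | ⟨k, hk, -, hi⟩)
  · refine two_mul_add_one_mem_nbhdCodes.2 (Nat.cast_le.2 (le_of_not_gt fun hnm => ?_))
    simpa [hm] using Bool.le_iff_imp.1 (hmono hnm.le) hacc
  · rwa [← hout k hk]

theorem rePred_mem_guessCodes {D : ℕ → ℕ → Bool} (hD : Primrec₂ D) :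
    REPred fun q : (ℕ × ℕ) × ℕ => q.2 ∈ guessCodes (D q.1.1) (· ∈ phi q.1.2 0) := by
  have hi : Primrec fun r : ((ℕ × ℕ) × ℕ) × ℕ => r.1.2 := Primrec.snd.comp Primrec.fst
  have hk : Primrec fun r : ((ℕ × ℕ) × ℕ) × ℕ => r.2 := Primrec.snd
  have hDk : Primrec fun r : ((ℕ × ℕ) × ℕ) × ℕ => D r.1.1.1 r.2 :=
    hD.comp (Primrec.fst.comp (Primrec.fst.comp Primrec.fst)) hk
  have hrejected : PrimrecPred fun r : ((ℕ × ℕ) × ℕ) × ℕ => r.1.2 = 2 * r.2 + 1 ∧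
      D r.1.1.1 r.2 = false :=
    (Primrec.eq.comp hi (Primrec.nat_add.comp (Primrec.nat_mul.comp (Primrec.const 2) hk)
      (Primrec.const 1))).and (Primrec.eq.comp hDk (Primrec.const false))
  have hcommitted : PrimrecPred fun r : ((ℕ × ℕ) × ℕ) × ℕ => D r.1.1.1 r.2 = true ∧
      (r.1.2 = 2 * r.2 ∨ r.1.2 % 2 = 1 ∧ r.1.2 ≤ 2 * r.2 + 1) :=
    (Primrec.eq.comp hDk (Primrec.const true)).and
      ((Primrec.eq.comp hi (Primrec.nat_mul.comp (Primrec.const 2) hk)).or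
        ((Primrec.eq.comp (Primrec.nat_mod.comp hi (Primrec.const 2)) (Primrec.const 1)).and
          (Primrec.nat_le.comp hi (Primrec.nat_add.comp
            (Primrec.nat_mul.comp (Primrec.const 2) hk) (Primrec.const 1)))))
  have hout : REPred fun r : ((ℕ × ℕ) × ℕ) × ℕ => r.2 ∈ phi r.1.1.2 0 :=
    rePred_mem_phi.comp (f := fun r : ((ℕ × ℕ) × ℕ) × ℕ => (r.1.1.2, r.2))
      ((Primrec.snd.comp (Primrec.fst.comp Primrec.fst)).pair hk).to_comp
  have hrejected' := REPred.exists (p := fun (q : (ℕ × ℕ) × ℕ) m =>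
    q.2 = 2 * m + 1 ∧ D q.1.1 m = false) hrejected.computablePred.to_re
  have hcommitted' := REPred.exists (p := fun (q : (ℕ × ℕ) × ℕ) n => n ∈ phi q.1.2 0 ∧
    D q.1.1 n = true ∧ (q.2 = 2 * n ∨ q.2 % 2 = 1 ∧ q.2 ≤ 2 * n + 1))
    (hout.and hcommitted.computablePred.to_re)
  refine (hrejected'.or hcommitted').of_eq fun q => ?_
  simp only [guessCodes, Set.mem_ofPred_eq, mem_nbhdCodes_coe]

/-- The name `ep p` guesses `⊤` until it is accepted, so by the recursion theorem it is accepted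
at some stage; if it is accepted by stage `n`, where `n` is the output of `p`, it commits to `n`
and becomes a name of `n`. -/
theorem exists_stages_of_markovSemidecN {A : Set ℕ∞} (hA : MarkovSemidecN A) (htop : ⊤ ∈ A) :
    ∃ acc : ℕ → ℕ → Bool, Primrec₂ acc ∧ (∀ p, Monotone (acc p)) ∧
      (∀ p, ∃ s, acc p s = true) ∧ ∀ p n, n ∈ phi p 0 → acc p n = true → (n : ℕ∞) ∈ A := by
  obtain ⟨I, hI, hIA⟩ := hA
  obtain ⟨D, hD, hDm, hID⟩ := hI.exists_stage
  obtain ⟨ep, hep, hW⟩ := exists_primrec_W_fixedPoint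
    (Q := fun e p i => i ∈ guessCodes (D e) (· ∈ phi p 0)) (rePred_mem_guessCodes hD)
  have hWeq : ∀ p, W (ep p) = guessCodes (D (ep p)) (· ∈ phi p 0) := fun p => Set.ext (hW p)
  refine ⟨fun p s => D (ep p) s, hD.comp (hep.comp Primrec.fst) Primrec.snd, fun p => hDm _,
    fun p => ?_, fun p n hn hacc => ?_⟩
  · by_contra! hnever
    have hname : isName (ep p) ⊤ := (hWeq p).trans (guessCodes_eq_top (by simpa using hnever))
    obtain ⟨s, hs⟩ := (hID _).1 ((hIA _ _ hname).1 htop)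
    exact hnever s hs
  · have hname : isName (ep p) n :=
      (hWeq p).trans (guessCodes_eq_coe (hDm _) (fun k hk => Part.mem_unique hk hn) hn hacc)
    exact (hIA _ _ hname).2 ((hID _).2 ⟨n, hacc⟩)

theorem exists_friedSet_subset {A : Set ℕ∞} (hA : MarkovSemidecN A) (htop : ⊤ ∈ A) :
    ∃ h, ComputableOrder h ∧ FriedSet h ⊆ A := by
  obtain ⟨acc, hacc, hmono, hex, hA⟩ := exists_stages_of_markovSemidecN hA htop
  refine ⟨stageOrder acc, computableOrder_stageOrder hacc hmono hex, ?_⟩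
  rintro x (rfl | ⟨n, rfl, hn⟩)
  · exact htop
  · obtain ⟨p, hp, hpn⟩ := knat_lt_iff.1 hn
    exact hA p n hpn (eq_true_of_size_lt_stageOrder hp)

/-- On `N̄`, the Ershov topology (generated by the Markov-semidecidable sets) is generated
by the singletons `{n}` together with the Friedberg sets. -/
theorem stmt10 :
    TopologicalSpace.generateFrom {A : Set ℕ∞ | MarkovSemidecN A} =
    TopologicalSpace.generateFrom
      ({S | ∃ n : ℕ, S = {(n : ℕ∞)}} ∪
        {S | ∃ h : ℕ → ℕ, ComputableOrder h ∧ S = FriedSet h}) := by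
  refine le_antisymm (TopologicalSpace.le_generateFrom_iff_subset_isOpen.2 ?_)
    (TopologicalSpace.le_generateFrom_iff_subset_isOpen.2 fun A hA => ?_)
  · rintro S (⟨n, rfl⟩ | ⟨h, hh, rfl⟩)
    exacts [.basic _ (markovSemidecN_singleton n), .basic _ (markovSemidecN_friedSet hh)]
  refine (@isOpen_iff_forall_mem_open _ (.generateFrom _) _).2 fun x hx => ?_
  induction x using ENat.recTopCoe with
  | top =>
    obtain ⟨h, hh, hsub⟩ := exists_friedSet_subset hA hx
    exact ⟨FriedSet h, hsub, .basic _ (Or.inr ⟨h, hh, rfl⟩), top_mem_friedSet h⟩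
  | coe n =>
    exact ⟨{(n : ℕ∞)}, Set.singleton_subset_iff.2 hx, .basic _ (Or.inl ⟨n, rfl⟩), rfl⟩
end

section
/- The singleton {⊥} ⊆ 𝕊 (Sierpiński space) is Markov-decidable relative to the halting set ∅′, but is not Type-2-decidable relative to any oracle. -/
/-- The halting set `∅′`. -/
def halts : Set ℕ := {e | (phi e e).Dom}

/-- Characteristic function of a set of naturals. -/
noncomputable def chi (S : Set ℕ) : ℕ → Bool :=
  fun n => @decide (n ∈ S) (Classical.propDecidable _)

/-- The finite prefix of length `m` of the oracle `f`. -/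
def pref (f : ℕ → ℕ) (m : ℕ) : List ℕ := (List.range m).map f

/-- The finite prefix of length `m` of a boolean oracle. -/
def prefB (f : ℕ → Bool) (m : ℕ) : List Bool := (List.range m).map f

/-- The admissible numbering of Sierpiński space `𝕊 = {⊥,⊤}` (with `⊥ = false`, `⊤ = true`):
`ν_𝕊(e) = ⊤` iff `φ_e(e)↓`. -/
noncomputable def nuS (e : ℕ) : Bool := @decide ((phi e e).Dom) (Classical.propDecidable _)

/-- `f` is a Type-2 name of the point `s ∈ 𝕊`: `s = ⊤` iff `f` eventually shows a nonzero. -/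
def SierpName (f : ℕ → ℕ) (s : Bool) : Prop := (s = true ↔ ∃ n, f n ≠ 0)

/-! A single query to `∅′` at position `e` decides `ν_𝕊(e) = ⊥`, since `ν_𝕊(e) = ⊤` means exactly
`e ∈ ∅′`. Relative to any oracle, a Type-2 decision procedure would have to answer `⊥` on the
zero name after reading some finite prefix; but that prefix extends to a name of `⊤`, which the
procedure then misclassifies. -/

def negLookup (e : ℕ) (l : List Bool) : Option Bool := l[e]?.map (!·)

theorem computable₂_negLookup : Computable₂ negLookup :=
  (Primrec.option_map (Primrec.list_getElem?.comp Primrec.snd Primrec.fst)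
    (Primrec.not.comp Primrec.snd).to₂).to_comp.to₂

theorem negLookup_append {e : ℕ} {l : List Bool} {b : Bool} (l' : List Bool)
    (h : negLookup e l = some b) : negLookup e (l ++ l') = some b := by
  obtain ⟨x, hx, -⟩ := Option.map_eq_some_iff.1 h
  rwa [negLookup, List.getElem?_append_left (List.getElem?_eq_some_iff.1 hx).1]

theorem negLookup_prefB (f : ℕ → Bool) (e : ℕ) : negLookup e (prefB f (e + 1)) = some (!f e) := by
  simp [negLookup, prefB]

theorem chi_halts_eq_nuS : chi halts = nuS := rfl

theorem pref_congr {f g : ℕ → ℕ} {m : ℕ} (h : ∀ n < m, f n = g n) : pref f m = pref g m :=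
  List.map_congr_left fun n hn => h n (List.mem_range.1 hn)

theorem sierpName_zero : SierpName (fun _ => 0) false := by
  simp [SierpName]

theorem exists_sierpName_top_pref_eq_zero (m : ℕ) :
    ∃ g, SierpName g true ∧ pref g m = pref (fun _ => 0) m :=
  ⟨fun n => if n < m then 0 else 1, ⟨fun _ => ⟨m, by simp⟩, fun _ => rfl⟩,
    pref_congr fun n hn => if_pos hn⟩

/-- The singleton `{⊥} ⊆ 𝕊` is Markov-decidable relative to the halting set (an oracle
machine with oracle `∅′`, given any index `e`, outputs whether `ν_𝕊(e) = ⊥`), but it is not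
Type-2-decidable relative to any oracle (no monotone — not even computable — functional on
names decides it, since `{⊥}` is not clopen). -/
theorem stmt12 :
    (∃ M : ℕ → List Bool → Option Bool, Computable₂ M ∧
      (∀ e l l' b, M e l = some b → M e (l ++ l') = some b) ∧
      ∀ e, ∃ m, M e (prefB (chi halts) m) = some (!nuS e)) ∧
    (¬ ∃ M : List ℕ → Option Bool,
      (∀ l l' b, M l = some b → M (l ++ l') = some b) ∧
      ∀ (s : Bool) (f : ℕ → ℕ), SierpName f s →
        (∃ m, M (pref f m) = some (!s)) ∧ (∀ m b, M (pref f m) = some b → b = !s)) := by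
  refine ⟨⟨negLookup, computable₂_negLookup, fun e l l' _ => negLookup_append l',
    fun e => ⟨e + 1, chi_halts_eq_nuS ▸ negLookup_prefB nuS e⟩⟩, ?_⟩
  rintro ⟨M, -, hdec⟩
  obtain ⟨m, hm⟩ := (hdec false _ sierpName_zero).1
  obtain ⟨g, hg, hpref⟩ := exists_sierpName_top_pref_eq_zero m
  exact absurd ((hdec true g hg).2 m true (hpref ▸ hm)) (by decide)
end

section
/- Let A be an oracle that computes the halting set ∅′. A set of computable binary sequences is Markov-semidecidable relative to A if and only if it is K-semidecidable relative to A. -/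
/-- `e` is a program (Markov-name) for the binary sequence `x`. -/
def computesSeq (e : ℕ) (x : ℕ → Bool) : Prop :=
  ∀ n, phi e n = Part.some (cond (x n) 1 0)

/-- Kolmogorov complexity of a computable binary sequence. -/
noncomputable def Kseq (x : ℕ → Bool) : ℕ := sInf (Nat.size '' {e | computesSeq e x})

/-- `h` is computable from the oracle `g` via an oracle machine. -/
def computesFrom (g h : ℕ → Bool) : Prop :=
  ∃ M : ℕ → List Bool → Option Bool, Computable₂ M ∧
    (∀ n l l' b, M n l = some b → M n (l ++ l') = some b) ∧
    ∀ n, ∃ m, M n (prefB g m) = some (h n)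

/-- `S` is Markov-semidecidable relative to the oracle `g`. -/
def MarkovSemidecRel (g : ℕ → Bool) (S : Set (ℕ → Bool)) : Prop :=
  ∃ M : ℕ → List Bool → Option Unit, Computable₂ M ∧
    (∀ e l l' v, M e l = some v → M e (l ++ l') = some v) ∧
    ∀ e (x : ℕ → Bool), Computable x → computesSeq e x →
      (x ∈ S ↔ ∃ m, M e (prefB g m) = some ())

/-- `S` is K-semidecidable relative to the oracle `g`: the machine gets a bound
`k ≥ K(x)` and reads prefixes of both `g` and (a Type-2 name of) `x`. -/
def KSemidecRel (g : ℕ → Bool) (S : Set (ℕ → Bool)) : Prop :=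
  ∃ M : ℕ → List Bool → List Bool → Option Unit,
    Computable (fun p : ℕ × List Bool × List Bool => M p.1 p.2.1 p.2.2) ∧
    (∀ k l₁ l₂ l₁' l₂' v, M k l₁ l₂ = some v → M k (l₁ ++ l₁') (l₂ ++ l₂') = some v) ∧
    ∀ (x : ℕ → Bool), Computable x → ∀ k, Kseq x ≤ k →
      (x ∈ S ↔ ∃ m, M k (prefB g m) (prefB x m) = some ())

/-!
A program `e` of `x` satisfies `K(x) ≤ size e ≤ e`, so a Markov-machine can run the K-machine
with bound `e` on the prefix of `x` that it obtains by simulating `φ_e`.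

Conversely, a bound `k ≥ K(x)` puts a shortest program of `x` among the `e < 2 ^ k`. Using `∅′`,
each such `e` is eventually settled: shown partial, shown to disagree with the given prefix of
`x`, or accepted by the Markov-machine; the K-machine accepts once all of them are settled. If
`x ∈ S`, every `e` is settled in the limit; conversely a shortest program of `x` is total and
agrees with `x`, so it can only have been settled by being accepted, whence `x ∈ S`.
-/

open Filter Nat.Partrec

theorem Computable.list_range_any {α : Type*} [Primcodable α] {p : α → ℕ → Bool}
    (hp : Computable₂ p) : Computable₂ fun a n => (List.range n).any (p a) := by
  refine (Computable.nat_rec Computable.snd (Computable.const false)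
    (Primrec.or.to_comp.comp (Computable.snd.comp Computable.snd) (hp.comp
      (Computable.fst.comp Computable.fst) (Computable.fst.comp Computable.snd))).to₂).of_eq
    fun ⟨a, n⟩ => ?_
  induction n with
  | zero => rfl
  | succ n ih => simp_all [List.range_succ]

theorem Computable.list_range_all {α : Type*} [Primcodable α] {p : α → ℕ → Bool}
    (hp : Computable₂ p) : Computable₂ fun a n => (List.range n).all (p a) := by
  simp only [List.all_eq_not_any_not]
  exact Primrec.not.to_comp.comp (list_range_any (Primrec.not.to_comp.comp hp).to₂)

@[simp]
theorem length_prefB (f : ℕ → Bool) (m : ℕ) : (prefB f m).length = m := by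
  simp [prefB]

theorem prefB_prefix (f : ℕ → Bool) {m n : ℕ} (h : m ≤ n) : prefB f m <+: prefB f n := by
  obtain ⟨d, rfl⟩ := Nat.exists_eq_add_of_le h
  exact ⟨_, by rw [prefB, prefB, List.range_add, List.map_append]⟩

theorem prefB_getD (f : ℕ → Bool) {m n : ℕ} (h : n < m) : (prefB f m).getD n false = f n := by
  simp [prefB, h]

theorem eventually_of_prefB {β : Type*} {M : List Bool → Option β}
    (hM : ∀ l l' b, M l = some b → M (l ++ l') = some b) {f : ℕ → Bool} {m : ℕ} {b : β}
    (h : M (prefB f m) = some b) : ∀ᶠ t in atTop, M (prefB f t) = some b :=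
  eventually_atTop.2 ⟨m, fun _ ht => by
    obtain ⟨l', hl'⟩ := prefB_prefix f ht
    exact hl' ▸ hM _ _ _ h⟩

theorem oracle_output_eq {g h : ℕ → Bool} {M : ℕ → List Bool → Option Bool}
    (hM : ∀ n l l' b, M n l = some b → M n (l ++ l') = some b)
    (hMh : ∀ n, ∃ m, M n (prefB g m) = some (h n)) {n m : ℕ} {b : Bool}
    (hb : M n (prefB g m) = some b) : b = h n := by
  obtain ⟨m', hm'⟩ := hMh n
  obtain ⟨_, h₁, h₂⟩ :=
    ((eventually_of_prefB (hM n) hb).and (eventually_of_prefB (hM n) hm')).exists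
  exact Option.some_injective _ (h₁.symm.trans h₂)

theorem takeWhile_isSome_prefix {α : Type*} :
    ∀ {L L' : List (Option α)},
      (∀ (i : ℕ) (a : α), L[i]? = some (some a) → L'[i]? = some (some a)) →
      L.takeWhile Option.isSome <+: L'.takeWhile Option.isSome
  | [], _, _ => by simp
  | Option.none :: _, _, _ => by simp
  | some a :: L, L', h => by
    obtain ⟨L', rfl⟩ : ∃ t, L' = some a :: t := by
      cases L' with
      | nil => simpa using h 0 a rfl
      | cons b t => exact ⟨t, by simpa using h 0 a rfl⟩
    simpa using takeWhile_isSome_prefix fun i b hb => h (i + 1) b hb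

def phiStep (e s : ℕ) : ℕ → Option ℕ := Code.evaln s (Denumerable.ofNat Code e)

theorem primrec_phiStep : Primrec fun p : ℕ × ℕ × ℕ => phiStep p.1 p.2.1 p.2.2 :=
  Code.primrec_evaln.comp
    (((Primrec.fst.comp Primrec.snd).pair ((Primrec.ofNat Code).comp Primrec.fst)).pair
      (Primrec.snd.comp Primrec.snd))

theorem phiStep_mono {e s s' n v : ℕ} (hs : s ≤ s') (h : phiStep e s n = some v) :
    phiStep e s' n = some v :=
  Code.evaln_mono hs h

theorem eventually_phiStep {e n v : ℕ} (h : v ∈ phi e n) :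
    ∀ᶠ s in atTop, phiStep e s n = some v := by
  obtain ⟨s, hs⟩ := Code.evaln_complete.1 h
  exact eventually_atTop.2 ⟨s, fun _ h' => phiStep_mono h' hs⟩

theorem computesSeq.phiStep_eq {e : ℕ} {x : ℕ → Bool} (hx : computesSeq e x) {s n v : ℕ}
    (h : phiStep e s n = some v) : v = cond (x n) 1 0 := by
  have hv : v ∈ phi e n := Code.evaln_sound h
  rwa [hx n, Part.mem_some_iff] at hv

theorem exists_computesSeq {x : ℕ → Bool} (hx : Computable x) : ∃ e, computesSeq e x := by
  obtain ⟨c, hc⟩ := Code.exists_code.1 <|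
    Partrec.nat_iff.1 (Computable.cond hx (Computable.const 1) (Computable.const 0))
  exact ⟨Encodable.encode c, fun n => by simp [phi, hc]⟩

theorem exists_computesSeq_size_eq_Kseq {x : ℕ → Bool} (hx : Computable x) :
    ∃ e, computesSeq e x ∧ Nat.size e = Kseq x := by
  obtain ⟨e, he⟩ := exists_computesSeq hx
  exact Nat.sInf_mem (s := Nat.size '' {e | computesSeq e x}) ⟨_, e, he, rfl⟩

theorem computesSeq.Kseq_le {e : ℕ} {x : ℕ → Bool} (hx : computesSeq e x) : Kseq x ≤ e :=
  (Nat.sInf_le (Set.mem_image_of_mem _ hx)).trans (Nat.size_le.2 Nat.lt_two_pow_self)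

theorem getElem?_map_range {β : Type*} (f : ℕ → β) {s i : ℕ} {b : β} :
    ((List.range s).map f)[i]? = some b ↔ i < s ∧ f i = b := by
  by_cases h : i < s <;> simp [h]

/-- The longest prefix of `φ_e` that converges within `s` steps, read as bits (`1` is `true`). -/
def runPrefix (e s : ℕ) : List Bool :=
  (((List.range s).map (phiStep e s)).takeWhile Option.isSome).map fun o => decide (o = some 1)

theorem primrec_runPrefix : Primrec₂ runPrefix := by
  refine Primrec.list_map (Primrec.list_takeWhile Primrec.option_isSome |>.comp
      (Primrec.list_map (Primrec.list_range.comp Primrec.snd)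
        (primrec_phiStep.comp ((Primrec.fst.comp Primrec.fst).pair
          ((Primrec.snd.comp Primrec.fst).pair Primrec.snd))).to₂))
    (Primrec.eq.decide.comp Primrec.snd (Primrec.const (some 1))).to₂

theorem runPrefix_mono (e : ℕ) {s s' : ℕ} (hs : s ≤ s') : runPrefix e s <+: runPrefix e s' := by
  refine (takeWhile_isSome_prefix fun i a hi => ?_).map _
  rw [getElem?_map_range] at hi ⊢
  exact ⟨hi.1.trans_le hs, phiStep_mono hs hi.2⟩

theorem prefB_eq_map_takeWhile (x : ℕ → Bool) (m : ℕ) :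
    prefB x m = (((List.range m).map fun i => some (cond (x i) 1 0)).takeWhile Option.isSome).map
      fun o => decide (o = some 1) := by
  rw [List.takeWhile_eq_self_iff.2 (by simp), List.map_map, prefB]
  congr 1
  funext i
  simp only [Function.comp_apply]
  cases x i <;> rfl

theorem computesSeq.runPrefix_prefix {e : ℕ} {x : ℕ → Bool} (hx : computesSeq e x) (s : ℕ) :
    runPrefix e s <+: prefB x s := by
  rw [prefB_eq_map_takeWhile]
  refine (takeWhile_isSome_prefix fun i a hi => ?_).map _
  rw [getElem?_map_range] at hi ⊢
  exact ⟨hi.1, by rw [hx.phiStep_eq hi.2]⟩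

theorem computesSeq.eventually_prefix_runPrefix {e : ℕ} {x : ℕ → Bool} (hx : computesSeq e x)
    (m : ℕ) : ∀ᶠ s in atTop, prefB x m <+: runPrefix e s := by
  have hconv : ∀ᶠ s in atTop, m ≤ s ∧ ∀ i < m, phiStep e s i = some (cond (x i) 1 0) := by
    refine (eventually_ge_atTop m).and <| (eventually_all_finite (Set.finite_lt_nat m)).2
      fun i _ => eventually_phiStep ?_
    rw [hx i]
    exact Part.mem_some _
  filter_upwards [hconv] with s ⟨hms, hs⟩
  rw [prefB_eq_map_takeWhile]
  refine (takeWhile_isSome_prefix fun i a hi => ?_).map _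
  rw [getElem?_map_range] at hi ⊢
  exact ⟨hi.1.trans_le hms, (hs i hi.1).trans hi.2⟩

section MarkovOfK

variable {MK : ℕ → List Bool → List Bool → Option Unit}

/-- On a program `e`, run the K-machine with bound `e ≥ K(x)` on the part of `x` that `φ_e` has
produced within as many steps as oracle bits have been read. -/
def markovOfK (MK : ℕ → List Bool → List Bool → Option Unit) (e : ℕ) (l : List Bool) :
    Option Unit :=
  MK e l (runPrefix e l.length)

theorem computable_markovOfK
    (hMK : Computable fun p : ℕ × List Bool × List Bool => MK p.1 p.2.1 p.2.2) :
    Computable₂ (markovOfK MK) :=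
  hMK.comp <| Computable.fst.pair <| Computable.snd.pair <|
    primrec_runPrefix.to_comp.comp Computable.fst (Computable.list_length.comp Computable.snd)

theorem markovOfK_mono
    (hMK_mono : ∀ k l₁ l₂ l₁' l₂' v, MK k l₁ l₂ = some v → MK k (l₁ ++ l₁') (l₂ ++ l₂') = some v)
    (e : ℕ) (l l' : List Bool) (v : Unit) (h : markovOfK MK e l = some v) :
    markovOfK MK e (l ++ l') = some v := by
  obtain ⟨r, hr⟩ := runPrefix_mono e (l.length.le_add_right l'.length)
  rw [markovOfK, List.length_append, ← hr]
  exact hMK_mono _ _ _ _ _ _ h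

theorem markovOfK_spec {g : ℕ → Bool} {S : Set (ℕ → Bool)}
    (hMK_mono : ∀ k l₁ l₂ l₁' l₂' v, MK k l₁ l₂ = some v → MK k (l₁ ++ l₁') (l₂ ++ l₂') = some v)
    (hMK : ∀ x : ℕ → Bool, Computable x → ∀ k, Kseq x ≤ k →
      (x ∈ S ↔ ∃ m, MK k (prefB g m) (prefB x m) = some ()))
    (e : ℕ) (x : ℕ → Bool) (hx : Computable x) (he : computesSeq e x) :
    x ∈ S ↔ ∃ m, markovOfK MK e (prefB g m) = some () := by
  simp only [markovOfK, length_prefB]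
  rw [hMK x hx e he.Kseq_le]
  constructor
  · rintro ⟨m, hm⟩
    obtain ⟨t, hmt, hxt⟩ := ((eventually_ge_atTop m).and (he.eventually_prefix_runPrefix m)).exists
    obtain ⟨l₁, hl₁⟩ := prefB_prefix g hmt
    obtain ⟨l₂, hl₂⟩ := hxt
    exact ⟨t, hl₁ ▸ hl₂ ▸ hMK_mono _ _ _ l₁ l₂ _ hm⟩
  · rintro ⟨t, ht⟩
    obtain ⟨r, hr⟩ := he.runPrefix_prefix t
    exact ⟨t, by simpa [hr] using hMK_mono _ _ _ [] r _ ht⟩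

end MarkovOfK

/-- A code of the constant function `fun _ => φ_e(n)`; it lies in `∅′` iff `φ_e(n)↓`. -/
def haltQuery (e n : ℕ) : ℕ :=
  Encodable.encode ((Denumerable.ofNat Code e).comp (Code.const n))

theorem haltQuery_mem_halts {e n : ℕ} : haltQuery e n ∈ halts ↔ (phi e n).Dom := by
  change (phi (haltQuery e n) (haltQuery e n)).Dom ↔ _
  rw [phi, haltQuery, Denumerable.ofNat_encode]
  change (Code.eval (Code.const n) _ >>= _).Dom ↔ _
  rw [Code.eval_const]
  exact Iff.of_eq (congrArg Part.Dom (Part.bind_some n _))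

theorem primrec₂_haltQuery : Primrec₂ haltQuery :=
  Primrec.encode.comp <| Code.primrec₂_comp.comp ((Primrec.ofNat Code).comp Primrec.fst)
    (Code.primrec_const.comp Primrec.snd)

section KOfMarkov

variable {Mh : ℕ → List Bool → Option Bool} {N : ℕ → List Bool → Option Unit} {g : ℕ → Bool}

def certifiesPartial (Mh : ℕ → List Bool → Option Bool) (e : ℕ) (l : List Bool) : Bool :=
  (List.range l.length).any fun n => decide (Mh (haltQuery e n) l = some false)

def refutesPrefix (e s : ℕ) (l : List Bool) : Bool :=
  (List.range l.length).any fun n =>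
    (phiStep e s n).isSome && !decide (phiStep e s n = some (cond (l.getD n false) 1 0))

def settles (Mh : ℕ → List Bool → Option Bool) (N : ℕ → List Bool → Option Unit) (e : ℕ)
    (l₁ l₂ : List Bool) : Bool :=
  certifiesPartial Mh e l₁ || refutesPrefix e l₁.length l₂ || (N e l₁).isSome

/-- A bound `k ≥ K(x)` confines the programs of `x` to `e < 2 ^ k`; settle all of them. -/
def kOfMarkov (Mh : ℕ → List Bool → Option Bool) (N : ℕ → List Bool → Option Unit) (k : ℕ)
    (l₁ l₂ : List Bool) : Option Unit :=
  bif (List.range (2 ^ k)).all fun e => settles Mh N e l₁ l₂ then some () else none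

theorem certifiesPartial_eq_true {e : ℕ} {l : List Bool} :
    certifiesPartial Mh e l = true ↔ ∃ n < l.length, Mh (haltQuery e n) l = some false := by
  simp [certifiesPartial]

theorem refutesPrefix_eq_true {e s : ℕ} {l : List Bool} :
    refutesPrefix e s l = true ↔
      ∃ n < l.length, ∃ v, phiStep e s n = some v ∧ v ≠ cond (l.getD n false) 1 0 := by
  simp only [refutesPrefix, List.any_eq_true, List.mem_range, Bool.and_eq_true, Bool.not_eq_true',
    decide_eq_false_iff_not]
  refine exists_congr fun n => and_congr_right fun _ => ?_
  cases phiStep e s n <;> simp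

theorem settles_eq_true {e : ℕ} {l₁ l₂ : List Bool} :
    settles Mh N e l₁ l₂ = true ↔ certifiesPartial Mh e l₁ = true ∨
      refutesPrefix e l₁.length l₂ = true ∨ N e l₁ = some () := by
  simp [settles, or_assoc, Option.isSome_iff_exists, Unique.exists_iff]

theorem kOfMarkov_eq_some {k : ℕ} {l₁ l₂ : List Bool} {v : Unit} :
    kOfMarkov Mh N k l₁ l₂ = some v ↔ ∀ e < 2 ^ k, settles Mh N e l₁ l₂ = true := by
  rw [kOfMarkov]
  cases h : (List.range (2 ^ k)).all fun e => settles Mh N e l₁ l₂ <;> simp_all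

theorem computable_certifiesPartial (hMh : Computable₂ Mh) : Computable₂ (certifiesPartial Mh) :=
  ((Computable.list_range_any (Primrec.eq.decide.to_comp.comp
      (hMh.comp (primrec₂_haltQuery.to_comp.comp (Computable.fst.comp Computable.fst)
        Computable.snd) (Computable.snd.comp Computable.fst))
      (Computable.const (some false))).to₂).comp Computable.id
    (Computable.list_length.comp Computable.snd)).to₂

theorem computable_refutesPrefix :
    Computable fun p : ℕ × ℕ × List Bool => refutesPrefix p.1 p.2.1 p.2.2 := by
  have hstep : Computable fun q : (ℕ × ℕ × List Bool) × ℕ => phiStep q.1.1 q.1.2.1 q.2 :=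
    (primrec_phiStep.comp ((Primrec.fst.comp Primrec.fst).pair
      ((Primrec.fst.comp (Primrec.snd.comp Primrec.fst)).pair Primrec.snd))).to_comp
  have hbit : Computable fun q : (ℕ × ℕ × List Bool) × ℕ => q.1.2.2.getD q.2 false :=
    (Primrec.list_getD false).to_comp.comp (Computable.snd.comp (Computable.snd.comp
      Computable.fst)) Computable.snd
  exact (Computable.list_range_any (Primrec.and.to_comp.comp
      (Primrec.option_isSome.to_comp.comp hstep)
      (Primrec.not.to_comp.comp (Primrec.eq.decide.to_comp.comp hstep
        (Computable.option_some.comp (Computable.cond hbit (Computable.const 1)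
          (Computable.const 0)))))).to₂).comp Computable.id
    (Computable.list_length.comp (Computable.snd.comp Computable.snd))

theorem computable_kOfMarkov (hMh : Computable₂ Mh) (hN : Computable₂ N) :
    Computable fun p : ℕ × List Bool × List Bool => kOfMarkov Mh N p.1 p.2.1 p.2.2 := by
  have hsettles : Computable₂ fun (p : ℕ × List Bool × List Bool) e => settles Mh N e p.2.1 p.2.2 :=
    (Primrec.or.to_comp.comp (Primrec.or.to_comp.comp
      ((computable_certifiesPartial hMh).comp Computable.snd
        (Computable.fst.comp (Computable.snd.comp Computable.fst)))
      (computable_refutesPrefix.comp (Computable.snd.pair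
        ((Computable.list_length.comp (Computable.fst.comp (Computable.snd.comp
          Computable.fst))).pair (Computable.snd.comp (Computable.snd.comp Computable.fst))))))
      (Primrec.option_isSome.to_comp.comp (hN.comp Computable.snd
        (Computable.fst.comp (Computable.snd.comp Computable.fst))))).to₂
  have hpow : Computable fun k : ℕ => 2 ^ k :=
    (Primrec₂.unpaired'.1 Nat.Primrec.pow).to_comp.comp (Computable.const 2) Computable.id
  exact Computable.cond ((Computable.list_range_all hsettles).comp Computable.id
    (hpow.comp Computable.fst)) (Computable.const (some ())) (Computable.const none)

theorem certifiesPartial_append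
    (hMh_mono : ∀ n l l' b, Mh n l = some b → Mh n (l ++ l') = some b) {e : ℕ}
    {l : List Bool} (l' : List Bool) (h : certifiesPartial Mh e l = true) :
    certifiesPartial Mh e (l ++ l') = true := by
  obtain ⟨n, hn, hMh⟩ := certifiesPartial_eq_true.1 h
  exact certifiesPartial_eq_true.2
    ⟨n, hn.trans_le (List.length_append ▸ Nat.le_add_right _ _), hMh_mono _ _ _ _ hMh⟩

theorem refutesPrefix_append {e s s' : ℕ} (hs : s ≤ s') {l : List Bool} (l' : List Bool)
    (h : refutesPrefix e s l = true) : refutesPrefix e s' (l ++ l') = true := by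
  obtain ⟨n, hn, v, hv, hne⟩ := refutesPrefix_eq_true.1 h
  exact refutesPrefix_eq_true.2 ⟨n, hn.trans_le (List.length_append ▸ Nat.le_add_right _ _), v,
    phiStep_mono hs hv, by rwa [List.getD_append _ _ _ _ hn]⟩

theorem kOfMarkov_mono (hMh_mono : ∀ n l l' b, Mh n l = some b → Mh n (l ++ l') = some b)
    (hN_mono : ∀ e l l' v, N e l = some v → N e (l ++ l') = some v)
    (k : ℕ) (l₁ l₂ l₁' l₂' : List Bool) (v : Unit) (h : kOfMarkov Mh N k l₁ l₂ = some v) :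
    kOfMarkov Mh N k (l₁ ++ l₁') (l₂ ++ l₂') = some v := by
  refine kOfMarkov_eq_some.2 fun e he => settles_eq_true.2 ?_
  rcases settles_eq_true.1 (kOfMarkov_eq_some.1 h e he) with h | h | h
  · exact .inl (certifiesPartial_append hMh_mono l₁' h)
  · exact .inr (.inl (refutesPrefix_append (by simp) l₂' h))
  · exact .inr (.inr (hN_mono _ _ _ _ h))

theorem exists_not_dom_of_certifiesPartial
    (hMh_mono : ∀ n l l' b, Mh n l = some b → Mh n (l ++ l') = some b)
    (hMh : ∀ n, ∃ m, Mh n (prefB g m) = some (chi halts n)) {e m : ℕ}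
    (h : certifiesPartial Mh e (prefB g m) = true) : ∃ n, ¬(phi e n).Dom := by
  obtain ⟨n, -, hn⟩ := certifiesPartial_eq_true.1 h
  have hq := oracle_output_eq hMh_mono hMh hn
  simp only [chi, eq_comm (a := false), decide_eq_false_iff_not, haltQuery_mem_halts] at hq
  exact ⟨n, hq⟩

theorem eventually_certifiesPartial
    (hMh_mono : ∀ n l l' b, Mh n l = some b → Mh n (l ++ l') = some b)
    (hMh : ∀ n, ∃ m, Mh n (prefB g m) = some (chi halts n)) {e n : ℕ} (hn : ¬(phi e n).Dom) :
    ∀ᶠ m in atTop, certifiesPartial Mh e (prefB g m) = true := by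
  obtain ⟨m, hm⟩ := hMh (haltQuery e n)
  have hq : chi halts (haltQuery e n) = false := by simpa [chi, haltQuery_mem_halts] using hn
  rw [hq] at hm
  filter_upwards [eventually_gt_atTop n, eventually_of_prefB (hMh_mono _) hm] with t hnt ht
  exact certifiesPartial_eq_true.2 ⟨n, by simpa using hnt, ht⟩

theorem computesSeq.refutesPrefix_eq_false {e : ℕ} {x : ℕ → Bool} (hx : computesSeq e x)
    (s m : ℕ) : refutesPrefix e s (prefB x m) = false := by
  rw [Bool.eq_false_iff, ne_eq, refutesPrefix_eq_true]
  rintro ⟨n, hn, v, hv, hne⟩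
  rw [length_prefB] at hn
  exact hne (by rw [prefB_getD x hn, hx.phiStep_eq hv])

theorem eventually_refutesPrefix {e n v : ℕ} {x : ℕ → Bool} (hv : v ∈ phi e n)
    (hne : v ≠ cond (x n) 1 0) : ∀ᶠ m in atTop, refutesPrefix e m (prefB x m) = true := by
  filter_upwards [eventually_gt_atTop n, eventually_phiStep hv] with m hnm hm
  exact refutesPrefix_eq_true.2 ⟨n, by simpa using hnm, v, hm, by rwa [prefB_getD x hnm]⟩

theorem eventually_settles
    (hMh_mono : ∀ n l l' b, Mh n l = some b → Mh n (l ++ l') = some b)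
    (hMh : ∀ n, ∃ m, Mh n (prefB g m) = some (chi halts n))
    (hN_mono : ∀ e l l' v, N e l = some v → N e (l ++ l') = some v) {S : Set (ℕ → Bool)}
    (hN : ∀ e (x : ℕ → Bool), Computable x → computesSeq e x →
      (x ∈ S ↔ ∃ m, N e (prefB g m) = some ()))
    {x : ℕ → Bool} (hx : Computable x) (hxS : x ∈ S) (e : ℕ) :
    ∀ᶠ m in atTop, settles Mh N e (prefB g m) (prefB x m) = true := by
  simp only [settles_eq_true, length_prefB]
  by_cases htot : ∀ n, (phi e n).Dom
  · by_cases he : computesSeq e x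
    · obtain ⟨m, hm⟩ := (hN e x hx he).1 hxS
      filter_upwards [eventually_of_prefB (hN_mono e) hm] with t ht using .inr (.inr ht)
    · obtain ⟨n, hn⟩ := not_forall.1 he
      have hv := Part.get_mem (htot n)
      filter_upwards [eventually_refutesPrefix hv fun h => hn (Part.eq_some_iff.2 (h ▸ hv))]
        with t ht using .inr (.inl ht)
  · obtain ⟨n, hn⟩ := not_forall.1 htot
    filter_upwards [eventually_certifiesPartial hMh_mono hMh hn] with t ht using .inl ht

theorem computesSeq.eq_some_of_settles
    (hMh_mono : ∀ n l l' b, Mh n l = some b → Mh n (l ++ l') = some b)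
    (hMh : ∀ n, ∃ m, Mh n (prefB g m) = some (chi halts n)) {e m : ℕ} {x : ℕ → Bool}
    (hx : computesSeq e x) (h : settles Mh N e (prefB g m) (prefB x m) = true) :
    N e (prefB g m) = some () := by
  rcases settles_eq_true.1 h with h | h | h
  · obtain ⟨n, hn⟩ := exists_not_dom_of_certifiesPartial hMh_mono hMh h
    exact absurd (by rw [hx n]; trivial) hn
  · simp [hx.refutesPrefix_eq_false] at h
  · exact h

theorem kOfMarkov_spec
    (hMh_mono : ∀ n l l' b, Mh n l = some b → Mh n (l ++ l') = some b)
    (hMh : ∀ n, ∃ m, Mh n (prefB g m) = some (chi halts n))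
    (hN_mono : ∀ e l l' v, N e l = some v → N e (l ++ l') = some v) {S : Set (ℕ → Bool)}
    (hN : ∀ e (x : ℕ → Bool), Computable x → computesSeq e x →
      (x ∈ S ↔ ∃ m, N e (prefB g m) = some ()))
    (x : ℕ → Bool) (hx : Computable x) (k : ℕ) (hk : Kseq x ≤ k) :
    x ∈ S ↔ ∃ m, kOfMarkov Mh N k (prefB g m) (prefB x m) = some () := by
  simp only [kOfMarkov_eq_some]
  constructor
  · intro hxS
    exact ((eventually_all_finite (Set.finite_lt_nat _)).2 fun e _ =>
      eventually_settles hMh_mono hMh hN_mono hN hx hxS e).exists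
  · rintro ⟨m, hm⟩
    obtain ⟨e, he, hsize⟩ := exists_computesSeq_size_eq_Kseq hx
    exact (hN e x hx he).2
      ⟨m, he.eq_some_of_settles hMh_mono hMh (hm e (Nat.size_le.1 (hsize ▸ hk)))⟩

end KOfMarkov

theorem stmt14_general (g : ℕ → Bool) (hg : computesFrom g (chi halts))
    (S : Set (ℕ → Bool)) :
    MarkovSemidecRel g S ↔ KSemidecRel g S := by
  obtain ⟨Mh, hMh_comp, hMh_mono, hMh⟩ := hg
  constructor
  · rintro ⟨N, hN_comp, hN_mono, hN⟩
    exact ⟨kOfMarkov Mh N, computable_kOfMarkov hMh_comp hN_comp,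
      kOfMarkov_mono hMh_mono hN_mono, kOfMarkov_spec hMh_mono hMh hN_mono hN⟩
  · rintro ⟨MK, hMK_comp, hMK_mono, hMK⟩
    exact ⟨markovOfK MK, computable_markovOfK hMK_comp, markovOfK_mono hMK_mono,
      markovOfK_spec hMK_mono hMK⟩

/-- For any oracle `g` computing the halting set, a set of computable binary sequences is
Markov-semidecidable relative to `g` iff it is K-semidecidable relative to `g`. -/
theorem stmt14 (g : ℕ → Bool) (hg : computesFrom g (chi halts))
    (S : Set (ℕ → Bool)) (hS : S ⊆ {x | Computable x}) :
    MarkovSemidecRel g S ↔ KSemidecRel g S :=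
  stmt14_general g hg S
end
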